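/- arXiv:math/0406468 — 3 statements merged into one kernel-verified Lean document; each statement's English description precedes it below -/
import Mathlib

section
/- Let y ∈ ℝⁿ have pairwise distinct absolute values, let 1 ≤ k ≤ n−1, σ > 0, and set λ = |y|₍ₖ₊₁₎. Let μ̂ₖ and μ̃ₖ be the soft and hard threshold estimators at level λ. Then the Mallows Cₚ criterion of the soft threshold estimator equals the hard-threshold criterion with random penalty: ‖y − μ̂ₖ‖² − nσ² + 2kσ² = ‖y − μ̃ₖ‖² − nσ² + pen(k), where pen(k) = k·|y|₍ₖ₊₁₎² + 2kσ². -/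
open Finset

/-- The soft threshold function with level `t`:
`η(x,t) = x·1_{|x|>t}·(1 − t/|x|)`. -/
noncomputable def softThreshold (x t : ℝ) : ℝ :=
  if t < |x| then x * (1 - t / |x|) else 0

/-- The hard threshold function with level `t`: `η'(x,t) = x·1_{|x|>t}`. -/
noncomputable def hardThreshold (x t : ℝ) : ℝ :=
  if t < |x| then x else 0

/-- `orderStatAbs y k` is `|y|₍ₖ₊₁₎`, the `(k+1)`-st largest value (0-based index `k`)
among the absolute values `|y₁|, …, |yₙ|` sorted in decreasing order. -/
noncomputable def orderStatAbs {n : ℕ} (y : Fin n → ℝ) (k : ℕ) : ℝ :=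
  ((List.ofFn fun i => |y i|).insertionSort (· ≥ ·)).getD k 0

/-! Above the threshold `λ` the soft residual `y - η(y, λ)` is `λ · sign y` while the hard
residual vanishes; below it both residuals are `y`. So the two residual sums differ by `λ²`
per coordinate exceeding `λ`, and when the `|yᵢ|` are distinct exactly `k` of them exceed
`|y|₍ₖ₊₁₎`. -/

theorem List.countP_getElem_lt_of_pairwise_gt {α : Type*} [LinearOrder α] {l : List α}
    (hl : l.Pairwise (· > ·)) (k : ℕ) (hk : k < l.length) :
    l.countP (fun x => l[k] < x) = k := by
  induction l generalizing k with
  | nil => simp at hk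
  | cons a t ih =>
    cases k with
    | zero =>
      refine List.countP_eq_zero.mpr fun x hx => ?_
      rcases List.mem_cons.mp hx with rfl | hx
      · simp
      · simpa using (List.rel_of_pairwise_cons hl hx).le
    | succ j =>
      simp only [List.getElem_cons_succ]
      rw [List.countP_cons_of_pos, ih hl.of_cons j]
      simpa using List.rel_of_pairwise_cons hl (List.getElem_mem _)

theorem Fin.card_filter_univ_eq_countP_ofFn {α : Type*} {n : ℕ} (f : Fin n → α) (p : α → Prop)
    [DecidablePred p] : #{i | p (f i)} = (List.ofFn f).countP (fun x => p x) := by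
  simp [List.ofFn_eq_map, List.countP_eq_length_filter, List.filter_map, Fin.univ_def,
    Finset.card, Finset.filter, Function.comp_def]

theorem card_lt_getD_insertionSort_ge {α : Type*} [LinearOrder α] {n : ℕ} {f : Fin n → α}
    (hf : Function.Injective f) {k : ℕ} (hk : k < n) (d : α) :
    #{i | ((List.ofFn f).insertionSort (· ≥ ·)).getD k d < f i} = k := by
  set l := (List.ofFn f).insertionSort (· ≥ ·)
  have hperm : l.Perm (List.ofFn f) := List.perm_insertionSort _ _
  have hkl : k < l.length := by simpa [hperm.length_eq] using hk
  have hl : l.Pairwise (· > ·) :=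
    ((List.pairwise_insertionSort _ _).and (hperm.nodup_iff.mpr (List.nodup_ofFn.mpr hf))).imp
      fun h => lt_of_le_of_ne h.1 h.2.symm
  rw [List.getD_eq_getElem _ _ hkl, Fin.card_filter_univ_eq_countP_ofFn f (l[k] < ·),
    ← hperm.countP_eq]
  exact List.countP_getElem_lt_of_pairwise_gt hl k hkl

theorem card_lt_orderStatAbs {n : ℕ} {y : Fin n → ℝ} (hinj : Function.Injective fun i => |y i|)
    {k : ℕ} (hk : k < n) : #{i | orderStatAbs y k < |y i|} = k :=
  card_lt_getD_insertionSort_ge hinj hk 0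

theorem orderStatAbs_nonneg {n : ℕ} (y : Fin n → ℝ) (k : ℕ) : 0 ≤ orderStatAbs y k := by
  set l := (List.ofFn fun i => |y i|).insertionSort (· ≥ ·)
  by_cases hk : k < l.length
  · obtain ⟨i, hi⟩ := List.mem_ofFn.mp <|
      (List.perm_insertionSort _ _).subset (List.getElem_mem hk : l[k] ∈ l)
    rw [orderStatAbs, List.getD_eq_getElem _ _ hk, ← hi]
    exact abs_nonneg _
  · rw [orderStatAbs, List.getD_eq_default _ _ (not_lt.mp hk)]

theorem sq_sub_softThreshold (x : ℝ) {t : ℝ} (ht : 0 ≤ t) :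
    (x - softThreshold x t) ^ 2 = (x - hardThreshold x t) ^ 2 + if t < |x| then t ^ 2 else 0 := by
  unfold softThreshold hardThreshold
  split_ifs with h
  · have hx : |x| ≠ 0 := (ht.trans_lt h).ne'
    field_simp
    rw [sq_abs]
    ring
  · ring

theorem sum_sq_sub_softThreshold {ι : Type*} [Fintype ι] (y : ι → ℝ) {t : ℝ} (ht : 0 ≤ t) :
    ∑ i, (y i - softThreshold (y i) t) ^ 2 =
      ∑ i, (y i - hardThreshold (y i) t) ^ 2 + #{i | t < |y i|} * t ^ 2 := by
  simp_rw [sq_sub_softThreshold _ ht, Finset.sum_add_distrib, ← Finset.sum_filter,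
    Finset.sum_const, nsmul_eq_mul]

theorem cp_soft_eq_hard_random_penalty_general (n k : ℕ) (y : Fin n → ℝ) (σ : ℝ)
    (hinj : Function.Injective fun i => |y i|) (hk : 1 ≤ k) (hk' : k ≤ n - 1) :
    (∑ i, (y i - softThreshold (y i) (orderStatAbs y k)) ^ 2) - n * σ ^ 2 + 2 * k * σ ^ 2 =
    (∑ i, (y i - hardThreshold (y i) (orderStatAbs y k)) ^ 2) - n * σ ^ 2 +
      ((k : ℝ) * (orderStatAbs y k) ^ 2 + 2 * k * σ ^ 2) := by
  have hkn : k < n := by omega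
  rw [sum_sq_sub_softThreshold y (orderStatAbs_nonneg y k), card_lt_orderStatAbs hinj hkn]
  ring

/-- The Mallows `Cₚ` criterion of the soft threshold estimator at level `λ = |y|₍ₖ₊₁₎`
equals the hard-threshold criterion with random penalty
`pen(k) = k·|y|₍ₖ₊₁₎² + 2kσ²`. -/
theorem cp_soft_eq_hard_random_penalty (n k : ℕ) (y : Fin n → ℝ) (σ : ℝ) (hσ : 0 < σ)
    (hinj : Function.Injective fun i => |y i|) (hk : 1 ≤ k) (hk' : k ≤ n - 1) :
    (∑ i, (y i - softThreshold (y i) (orderStatAbs y k)) ^ 2) - n * σ ^ 2 + 2 * k * σ ^ 2 =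
    (∑ i, (y i - hardThreshold (y i) (orderStatAbs y k)) ^ 2) - n * σ ^ 2 +
      ((k : ℝ) * (orderStatAbs y k) ^ 2 + 2 * k * σ ^ 2) :=
  cp_soft_eq_hard_random_penalty_general n k y σ hinj hk hk'
end

section
/- Let Q be the tail function of the chi-square distribution with 1 degree of freedom, and define its generalized inverse Q⁻¹(u) = inf{t ≥ 0 : Q(t) ≤ u} for u ∈ (0,1). Then Q⁻¹(u) / (2·log(1/u)) → 1 as u → 0⁺. -/
open MeasureTheory ProbabilityTheory Filter

/-- The tail function of the chi-square distribution with one degree of freedom: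
`Q(t) = P(Z² > t)` for `Z` standard Gaussian. -/
noncomputable def chiSqOneTail (t : ℝ) : ℝ :=
  (((gaussianReal 0 1).map fun x => x ^ 2) (Set.Ioi t)).toReal

/-- The generalized inverse `Q⁻¹(u) = inf {t ≥ 0 : Q(t) ≤ u}`. -/
noncomputable def chiSqOneTailInv (u : ℝ) : ℝ :=
  sInf {t : ℝ | 0 ≤ t ∧ chiSqOneTail t ≤ u}

/-!
Chernoff's bound on both Gaussian tails gives `Q(t) ≤ 2 exp(-t/2)`, and bounding the density
from below on `(√t, √t + 1]` gives `Q(t) ≥ exp(-(√t + 1)²/2 - 1)`. With `L = log(1/u)`, the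
first puts `2 log(2/u)` in the set defining `Q⁻¹(u)`, the second forces every element of that
set to be at least `2L - 2√(2L) - 3`. Hence `Q⁻¹(u) = 2L + O(√L)`, and dividing by `2L` gives
the limit.
-/

open Real Set Topology

lemma gaussianReal_real_Ici_le {a : ℝ} (ha : 0 ≤ a) :
    (gaussianReal 0 1).real (Ici a) ≤ exp (-a ^ 2 / 2) := by
  refine (measure_ge_le_exp_mul_mgf a ha (integrable_exp_mul_gaussianReal a)).trans_eq ?_
  rw [mgf_fun_id_gaussianReal, ← exp_add]
  congr 1
  push_cast
  ring

lemma gaussianReal_real_Iic_le {a : ℝ} (ha : 0 ≤ a) :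
    (gaussianReal 0 1).real (Iic (-a)) ≤ exp (-a ^ 2 / 2) := by
  refine (measure_le_le_exp_mul_mgf (-a) (neg_nonpos.2 ha)
    (integrable_exp_mul_gaussianReal (-a))).trans_eq ?_
  rw [mgf_fun_id_gaussianReal, ← exp_add]
  congr 1
  push_cast
  ring

lemma sqrt_two_mul_pi_le_exp_one : √(2 * π) ≤ exp 1 := by
  rw [sqrt_le_left (exp_pos 1).le]
  nlinarith [pi_lt_d2, exp_one_gt_d9]

lemma exp_le_gaussianReal_real_Ioi {a : ℝ} (ha : 0 ≤ a) :
    exp (-(a + 1) ^ 2 / 2 - 1) ≤ (gaussianReal 0 1).real (Ioi a) := by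
  rw [measureReal_def, gaussianReal_apply_eq_integral 0 one_ne_zero,
    ENNReal.toReal_ofReal
      (setIntegral_nonneg measurableSet_Ioi fun x _ => gaussianPDFReal_nonneg 0 1 x)]
  have hpdf : exp (-(a + 1) ^ 2 / 2 - 1) ≤ gaussianPDFReal 0 1 (a + 1) := by
    simp only [gaussianPDFReal, NNReal.coe_one, mul_one, sub_zero]
    rw [sub_eq_add_neg, exp_add, exp_neg, mul_comm]
    gcongr
    exact sqrt_two_mul_pi_le_exp_one
  calc exp (-(a + 1) ^ 2 / 2 - 1) ≤ ∫ _ in Ioc a (a + 1), gaussianPDFReal 0 1 (a + 1) := by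
        simp [hpdf]
    _ ≤ ∫ x in Ioc a (a + 1), gaussianPDFReal 0 1 x := by
        refine setIntegral_mono_on (integrableOn_const (by simp) (by simp))
          (integrable_gaussianPDFReal 0 1).integrableOn measurableSet_Ioc fun x hx => ?_
        simp only [gaussianPDFReal, NNReal.coe_one, mul_one, sub_zero]
        gcongr
        · linarith [hx.1]
        · exact hx.2
    _ ≤ ∫ x in Ioi a, gaussianPDFReal 0 1 x :=
        setIntegral_mono_set (integrable_gaussianPDFReal 0 1).integrableOn
          (ae_of_all _ (gaussianPDFReal_nonneg 0 1)) Ioc_subset_Ioi_self.eventuallyLE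

lemma chiSqOneTail_eq (t : ℝ) : chiSqOneTail t = (gaussianReal 0 1).real {x | t < x ^ 2} := by
  rw [chiSqOneTail, ← measureReal_def, map_measureReal_apply (by fun_prop) measurableSet_Ioi]
  rfl

lemma chiSqOneTail_le {t : ℝ} (ht : 0 ≤ t) : chiSqOneTail t ≤ 2 * exp (-t / 2) := by
  have hsub : {x : ℝ | t < x ^ 2} ⊆ Ici √t ∪ Iic (-√t) := fun x (hx : t < x ^ 2) => by
    have : √t ≤ |x| := sqrt_sq_eq_abs x ▸ sqrt_le_sqrt hx.le
    exact (le_abs'.1 this).symm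
  calc chiSqOneTail t ≤ (gaussianReal 0 1).real (Ici √t ∪ Iic (-√t)) := by
        rw [chiSqOneTail_eq]; exact measureReal_mono hsub
    _ ≤ exp (-√t ^ 2 / 2) + exp (-√t ^ 2 / 2) :=
        (measureReal_union_le _ _).trans (add_le_add (gaussianReal_real_Ici_le (sqrt_nonneg t))
          (gaussianReal_real_Iic_le (sqrt_nonneg t)))
    _ = 2 * exp (-t / 2) := by rw [sq_sqrt ht]; ring

lemma exp_le_chiSqOneTail (t : ℝ) : exp (-(√t + 1) ^ 2 / 2 - 1) ≤ chiSqOneTail t := by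
  refine (exp_le_gaussianReal_real_Ioi (sqrt_nonneg t)).trans ?_
  rw [chiSqOneTail_eq]
  exact measureReal_mono fun x (hx : √t < x) => (sqrt_lt' ((sqrt_nonneg t).trans_lt hx)).1 hx

lemma two_mul_log_two_div_mem_sublevel {u : ℝ} (hu : 0 < u) (hu2 : u ≤ 2) :
    2 * log (2 / u) ∈ {t : ℝ | 0 ≤ t ∧ chiSqOneTail t ≤ u} := by
  have h0 : 0 ≤ 2 * log (2 / u) := mul_nonneg zero_le_two (log_nonneg ((one_le_div hu).2 hu2))
  refine ⟨h0, (chiSqOneTail_le h0).trans_eq ?_⟩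
  rw [show -(2 * log (2 / u)) / 2 = -log (2 / u) by ring, exp_neg, exp_log (by positivity)]
  field_simp

lemma chiSqOneTailInv_le {u : ℝ} (hu : 0 < u) (hu2 : u ≤ 2) :
    chiSqOneTailInv u ≤ 2 * log (2 / u) :=
  csInf_le ⟨0, fun _ ht => ht.1⟩ (two_mul_log_two_div_mem_sublevel hu hu2)

lemma le_chiSqOneTailInv {u : ℝ} (hu : 0 < u) (hu2 : u ≤ 2) :
    2 * log (1 / u) - 2 * √(2 * log (1 / u)) - 3 ≤ chiSqOneTailInv u := by
  refine le_csInf ⟨_, two_mul_log_two_div_mem_sublevel hu hu2⟩ fun t ⟨ht, htu⟩ => ?_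
  have hlog : 2 * log (1 / u) ≤ (√t + 1) ^ 2 + 2 := by
    have := (log_le_log (exp_pos _) ((exp_le_chiSqOneTail t).trans htu))
    rw [log_exp] at this
    rw [one_div, log_inv]
    linarith
  rcases le_or_gt (2 * log (1 / u)) t with h | h
  · linarith [sqrt_nonneg (2 * log (1 / u))]
  · have : √t ≤ √(2 * log (1 / u)) := sqrt_le_sqrt h.le
    nlinarith [sq_sqrt ht]

lemma abs_chiSqOneTailInv_sub_le {u : ℝ} (hu : 0 < u) (hu2 : u ≤ 2) :
    |chiSqOneTailInv u - 2 * log (1 / u)| ≤ 2 * √(2 * log (1 / u)) + 3 := by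
  have hupper : chiSqOneTailInv u ≤ 2 * log (1 / u) + 2 * log 2 := by
    have := chiSqOneTailInv_le hu hu2
    rwa [div_eq_mul_one_div, log_mul two_ne_zero (by positivity), mul_add, add_comm] at this
  rw [abs_le]
  constructor
  · linarith [le_chiSqOneTailInv hu hu2]
  · linarith [sqrt_nonneg (2 * log (1 / u)), log_two_lt_d9]

lemma tendsto_two_mul_sqrt_add_three_div_atTop :
    Tendsto (fun L : ℝ => (2 * √(2 * L) + 3) / (2 * L)) atTop (𝓝 0) := by
  have : Tendsto (fun L : ℝ => √(2 / L) + 3 / 2 / L) atTop (𝓝 0) := by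
    have h := ((tendsto_const_nhds (x := (2 : ℝ))).div_atTop tendsto_id).sqrt.add
      ((tendsto_const_nhds (x := (3 / 2 : ℝ))).div_atTop tendsto_id)
    rwa [sqrt_zero, zero_add] at h
  refine this.congr' ?_
  filter_upwards [eventually_gt_atTop 0] with L hL
  have hL' : √L ≠ 0 := (sqrt_pos.2 hL).ne'
  rw [sqrt_div' _ hL.le, sqrt_mul zero_le_two]
  field_simp
  linear_combination (-2 * √2) * sq_sqrt hL.le

/-- `Q⁻¹(u) / (2·log(1/u)) → 1` as `u → 0⁺` (for `u ∈ (0,1)`). -/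
theorem tendsto_chiSqOneTailInv_div_two_log :
    Tendsto (fun u => chiSqOneTailInv u / (2 * Real.log (1 / u)))
      (nhdsWithin 0 (Set.Ioo (0 : ℝ) 1)) (nhds 1) := by
  have hlog : Tendsto (fun u : ℝ => log (1 / u)) (𝓝[Ioo 0 1] 0) atTop := by
    simp_rw [one_div, log_inv]
    exact tendsto_neg_atBot_atTop.comp (tendsto_log_nhdsGT_zero.mono_left
      (nhdsWithin_mono _ Ioo_subset_Ioi_self))
  rw [tendsto_iff_norm_sub_tendsto_zero]
  refine squeeze_zero' (Eventually.of_forall fun _ => norm_nonneg _) ?_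
    (tendsto_two_mul_sqrt_add_three_div_atTop.comp hlog)
  filter_upwards [self_mem_nhdsWithin] with u ⟨hu0, hu1⟩
  have hL : 0 < 2 * log (1 / u) := mul_pos two_pos (log_pos (one_lt_one_div hu0 hu1))
  rw [Real.norm_eq_abs, div_sub_one hL.ne', abs_div, abs_of_pos hL]
  exact div_le_div_of_nonneg_right (abs_chiSqOneTailInv_sub_le hu0 (by linarith)) hL.le
end

section
/- Let (Zᵢ)_{i≥1} be a sequence of independent standard Gaussian random variables, and fix an integer k ≥ 0. Then for every ε > 0: (a) P(#{i ≤ n : Zᵢ² > (1+ε)·2·log n} ≥ k+1) → 0 as n → ∞, and (b) P(#{i ≤ n : Zᵢ² > (1−ε)·2·log n} ≤ k) → 0 as n → ∞. Equivalently, the (k+1)-st largest value among Z₁², …, Zₙ², divided by 2·log n, converges to 1 in probability. -/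
/-!
Let `q(t) = P(Z² > t)`. The Chernoff bound gives `q(t) ≤ 2 e^{-t/2}`, and integrating the density
over `(√t, √t + 1]` gives `q(t) ≥ φ(√t + 1)`. At the level `t = (1 + ε) 2 log n` the expected
number of exceedances is `n q(t) ≤ 2 n^{-ε} → 0`, so by the union bound even one exceedance is
unlikely. At `t = (1 - ε) 2 log n` instead `n q(t) ≥ c n^ε e^{-√(2 log n)} → ∞`. Cut `{0, …, n-1}`
into `k + 1` blocks of length `m = ⌊n / (k + 1)⌋`: at most `k` exceedances leave some block without
any, which by independence has probability `(1 - q)^m ≤ e^{-m q} → 0`.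
-/

open MeasureTheory ProbabilityTheory Filter Real Set
open scoped NNReal ENNReal Topology

theorem Finset.le_card_filter_range_mul {p : ℕ → Prop} [DecidablePred p] {m K : ℕ}
    (h : ∀ j < K, ∃ i ∈ Finset.Ico (j * m) (j * m + m), p i) :
    K ≤ ((Finset.range (K * m)).filter p).card := by
  induction K with
  | zero => simp
  | succ K ih =>
    obtain ⟨i, hi, hpi⟩ := h K K.lt_succ_self
    rw [Finset.mem_Ico] at hi
    have hsub : insert i ((Finset.range (K * m)).filter p) ⊆
        (Finset.range ((K + 1) * m)).filter p := by
      refine Finset.insert_subset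
        (Finset.mem_filter.2 ⟨Finset.mem_range.2 (by nlinarith), hpi⟩) ?_
      exact Finset.filter_subset_filter _ (Finset.range_subset_range.2 (by nlinarith))
    have hi' : i ∉ (Finset.range (K * m)).filter p := by
      rw [Finset.mem_filter, Finset.mem_range]; omega
    calc K + 1 ≤ ((Finset.range (K * m)).filter p).card + 1 :=
          Nat.succ_le_succ (ih fun j hj => h j (by omega))
      _ = (insert i ((Finset.range (K * m)).filter p)).card :=
          (Finset.card_insert_of_notMem hi').symm
      _ ≤ _ := Finset.card_le_card hsub

theorem ProbabilityTheory.iIndepFun.measure_biInter_preimage_eq_pow {Ω β ι : Type*}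
    [MeasurableSpace Ω] [MeasurableSpace β] {P : Measure Ω} {μ : Measure β} {X : ι → Ω → β}
    (hindep : iIndepFun X P) (hX : ∀ i, HasLaw (X i) μ P) (B : Finset ι) {S : Set β}
    (hS : MeasurableSet S) :
    P (⋂ i ∈ B, X i ⁻¹' S) = μ S ^ B.card := by
  rw [hindep.meas_biInter fun i _ => ⟨S, hS, rfl⟩, ← Finset.prod_const]
  refine Finset.prod_congr rfl fun i _ => ?_
  rw [← (hX i).map_eq, Measure.map_apply_of_aemeasurable (hX i).aemeasurable hS]

section Exceedances

variable {Ω : Type*} [MeasurableSpace Ω] {P : Measure Ω} {μ : Measure ℝ} {X : ℕ → Ω → ℝ}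

noncomputable def exceedanceCount (X : ℕ → Ω → ℝ) (n : ℕ) (t : ℝ) (ω : Ω) : ℕ :=
  ((Finset.range n).filter fun i => t < X i ω).card

theorem measure_exceedanceCount_pos_le (hX : ∀ i, HasLaw (X i) μ P) (n : ℕ) (t : ℝ) :
    P {ω | 0 < exceedanceCount X n t ω} ≤ n * μ (Ioi t) := by
  have hsub : {ω | 0 < exceedanceCount X n t ω} ⊆ ⋃ i ∈ Finset.range n, X i ⁻¹' Ioi t := by
    intro ω hω
    obtain ⟨i, hi⟩ := Finset.card_pos.1 hω
    rw [Finset.mem_filter] at hi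
    exact mem_biUnion hi.1 hi.2
  calc P {ω | 0 < exceedanceCount X n t ω}
      ≤ ∑ i ∈ Finset.range n, P (X i ⁻¹' Ioi t) :=
        (measure_mono hsub).trans (measure_biUnion_finset_le _ _)
    _ = ∑ _i ∈ Finset.range n, μ (Ioi t) := Finset.sum_congr rfl fun i _ => by
        rw [← (hX i).map_eq,
          Measure.map_apply_of_aemeasurable (hX i).aemeasurable measurableSet_Ioi]
    _ = n * μ (Ioi t) := by simp

theorem tendsto_measure_exceedanceCount_ge_nhds_zero [IsFiniteMeasure μ]
    (hX : ∀ i, HasLaw (X i) μ P) {t : ℕ → ℝ}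
    (ht : Tendsto (fun n : ℕ => n * μ.real (Ioi (t n))) atTop (𝓝 0)) (k : ℕ) :
    Tendsto (fun n => P {ω | k + 1 ≤ exceedanceCount X n (t n) ω}) atTop (𝓝 0) := by
  have hbound : Tendsto (fun n : ℕ => ENNReal.ofReal (n * μ.real (Ioi (t n)))) atTop (𝓝 0) := by
    simpa only [ENNReal.ofReal_zero] using ENNReal.tendsto_ofReal ht
  refine tendsto_of_tendsto_of_tendsto_of_le_of_le tendsto_const_nhds hbound (fun _ => zero_le)
    fun n => ?_
  calc P {ω | k + 1 ≤ exceedanceCount X n (t n) ω}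
      ≤ P {ω | 0 < exceedanceCount X n (t n) ω} :=
        measure_mono fun _ hω => (Nat.succ_pos k).trans_le hω
    _ ≤ n * μ (Ioi (t n)) := measure_exceedanceCount_pos_le hX n (t n)
    _ = ENNReal.ofReal (n * μ.real (Ioi (t n))) := by
        rw [ENNReal.ofReal_mul (by positivity), ofReal_measureReal, ENNReal.ofReal_natCast]

theorem measure_exceedanceCount_le_le (hX : ∀ i, HasLaw (X i) μ P) (hindep : iIndepFun X P)
    (n k : ℕ) (t : ℝ) :
    P {ω | exceedanceCount X n t ω ≤ k} ≤ (k + 1) * μ (Iic t) ^ (n / (k + 1)) := by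
  set m := n / (k + 1)
  have hsub : {ω | exceedanceCount X n t ω ≤ k} ⊆
      ⋃ j ∈ Finset.range (k + 1), ⋂ i ∈ Finset.Ico (j * m) (j * m + m), X i ⁻¹' Iic t := by
    intro ω hω
    by_contra hnot
    simp only [mem_iUnion, mem_iInter, mem_preimage, mem_Iic, Finset.mem_range, exists_prop] at hnot
    push Not at hnot
    have hblocks := Finset.le_card_filter_range_mul hnot
    have hmono : ((Finset.range ((k + 1) * m)).filter fun i => t < X i ω).card ≤
        exceedanceCount X n t ω :=
      Finset.card_le_card (Finset.filter_subset_filter _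
        (Finset.range_subset_range.2 (Nat.mul_div_le n (k + 1))))
    exact absurd (hblocks.trans hmono) (not_le.2 (Nat.lt_succ_of_le hω))
  calc P {ω | exceedanceCount X n t ω ≤ k}
      ≤ ∑ j ∈ Finset.range (k + 1), P (⋂ i ∈ Finset.Ico (j * m) (j * m + m), X i ⁻¹' Iic t) :=
        (measure_mono hsub).trans (measure_biUnion_finset_le _ _)
    _ = ∑ _j ∈ Finset.range (k + 1), μ (Iic t) ^ m := Finset.sum_congr rfl fun j _ => by
        rw [hindep.measure_biInter_preimage_eq_pow hX _ measurableSet_Iic, Nat.card_Ico,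
          Nat.add_sub_cancel_left]
    _ = (k + 1) * μ (Iic t) ^ m := by simp

theorem measure_Iic_le_ofReal_exp_neg [IsProbabilityMeasure μ] (t : ℝ) :
    μ (Iic t) ≤ ENNReal.ofReal (exp (-μ.real (Ioi t))) := by
  rw [← ofReal_measureReal, ← compl_Ioi, probReal_compl_eq_one_sub measurableSet_Ioi]
  exact ENNReal.ofReal_le_ofReal (one_sub_le_exp_neg _)

theorem tendsto_natCast_div_mul_atTop {q : ℕ → ℝ} (hq : ∀ n, 0 ≤ q n)
    (h : Tendsto (fun n : ℕ => n * q n) atTop atTop) {d : ℕ} (hd : 0 < d) :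
    Tendsto (fun n => ((n / d : ℕ) : ℝ) * q n) atTop atTop := by
  refine tendsto_atTop_mono' _ ?_ (h.atTop_div_const (by positivity : (0 : ℝ) < 2 * d))
  filter_upwards [eventually_ge_atTop d] with n hn
  have hlt := Nat.lt_div_mul_add (a := n) hd
  have hone : 1 ≤ n / d := (Nat.one_le_div_iff hd).2 hn
  have hcast : (n : ℝ) ≤ 2 * d * (n / d : ℕ) := by
    exact_mod_cast (by nlinarith : n ≤ 2 * d * (n / d))
  rw [div_le_iff₀ (by positivity)]
  nlinarith [hq n]

theorem tendsto_measure_exceedanceCount_le_nhds_zero [IsProbabilityMeasure μ]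
    (hX : ∀ i, HasLaw (X i) μ P) (hindep : iIndepFun X P) {t : ℕ → ℝ}
    (ht : Tendsto (fun n : ℕ => n * μ.real (Ioi (t n))) atTop atTop) (k : ℕ) :
    Tendsto (fun n => P {ω | exceedanceCount X n (t n) ω ≤ k}) atTop (𝓝 0) := by
  set q := fun n => μ.real (Ioi (t n))
  have hmq := tendsto_natCast_div_mul_atTop (fun _ => measureReal_nonneg) ht k.succ_pos
  have hbound : Tendsto (fun n => (k + 1 : ℝ≥0∞) *
      ENNReal.ofReal (exp (-(((n / (k + 1) : ℕ) : ℝ) * q n)))) atTop (𝓝 0) := by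
    simpa only [Function.comp_apply, ENNReal.ofReal_zero, mul_zero] using
      ENNReal.Tendsto.const_mul
      (ENNReal.tendsto_ofReal (tendsto_exp_atBot.comp (tendsto_neg_atTop_atBot.comp hmq)))
      (Or.inr (by finiteness))
  refine tendsto_of_tendsto_of_tendsto_of_le_of_le tendsto_const_nhds hbound (fun _ => zero_le)
    fun n => (measure_exceedanceCount_le_le hX hindep n k (t n)).trans ?_
  calc (k + 1 : ℝ≥0∞) * μ (Iic (t n)) ^ (n / (k + 1))
      ≤ (k + 1) * ENNReal.ofReal (exp (-q n)) ^ (n / (k + 1)) := by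
        gcongr; exact measure_Iic_le_ofReal_exp_neg (t n)
    _ = (k + 1) * ENNReal.ofReal (exp (-(((n / (k + 1) : ℕ) : ℝ) * q n))) := by
        rw [← ENNReal.ofReal_pow (exp_nonneg _), ← exp_nat_mul, mul_neg]

end Exceedances

lemma hasSubgaussianMGF_id_gaussianReal (v : ℝ≥0) :
    HasSubgaussianMGF id v (gaussianReal 0 v) where
  integrable_exp_mul := integrable_exp_mul_gaussianReal
  mgf_le t := by simp [mgf_id_gaussianReal]

lemma gaussianReal_real_sq_gt_le {t : ℝ} (ht : 0 ≤ t) :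
    (gaussianReal 0 1).real {x | t < x ^ 2} ≤ 2 * exp (-t / 2) := by
  have hsub : {x : ℝ | t < x ^ 2} ⊆ {x | √t ≤ id x} ∪ {x | √t ≤ (-id) x} := by
    intro x hx
    have : √t ≤ |x| := by rw [← sqrt_sq_eq_abs]; exact sqrt_le_sqrt hx.le
    rcases le_abs'.1 this with h | h
    · exact Or.inr (show √t ≤ -x by linarith)
    · exact Or.inl h
  have hG := hasSubgaussianMGF_id_gaussianReal 1
  have htail : exp (-√t ^ 2 / (2 * ((1 : ℝ≥0) : ℝ))) = exp (-t / 2) := by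
    rw [sq_sqrt ht]; norm_num
  calc (gaussianReal 0 1).real {x | t < x ^ 2}
      ≤ (gaussianReal 0 1).real {x | √t ≤ id x} + (gaussianReal 0 1).real {x | √t ≤ (-id) x} :=
        (measureReal_mono hsub).trans (measureReal_union_le _ _)
    _ ≤ exp (-t / 2) + exp (-t / 2) := by
        rw [← htail]
        exact add_le_add (hG.measure_ge_le (sqrt_nonneg t)) (hG.neg.measure_ge_le (sqrt_nonneg t))
    _ = 2 * exp (-t / 2) := by ring

lemma gaussianReal_real_eq_integral (μ : ℝ) {v : ℝ≥0} (hv : v ≠ 0) (s : Set ℝ) :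
    (gaussianReal μ v).real s = ∫ x in s, gaussianPDFReal μ v x := by
  rw [measureReal_def, gaussianReal_apply_eq_integral μ hv,
    ENNReal.toReal_ofReal (integral_nonneg (gaussianPDFReal_nonneg μ v))]

lemma gaussianPDFReal_add_one_le_gaussianReal_real_Ioi {a : ℝ} (ha : 0 ≤ a) :
    gaussianPDFReal 0 1 (a + 1) ≤ (gaussianReal 0 1).real (Ioi a) := by
  calc gaussianPDFReal 0 1 (a + 1)
      = gaussianPDFReal 0 1 (a + 1) * volume.real (Ioc a (a + 1)) := by simp
    _ ≤ ∫ x in Ioc a (a + 1), gaussianPDFReal 0 1 x := by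
        refine setIntegral_ge_of_const_le_real measurableSet_Ioc measure_Ioc_lt_top.ne
          (fun x hx => ?_) (integrable_gaussianPDFReal 0 1).integrableOn
        simp only [gaussianPDFReal_def, NNReal.coe_one, sub_zero, mul_one]
        gcongr
        all_goals linarith [hx.1, hx.2]
    _ ≤ ∫ x in Ioi a, gaussianPDFReal 0 1 x :=
        setIntegral_mono_set (integrable_gaussianPDFReal 0 1).integrableOn
          (ae_of_all _ (gaussianPDFReal_nonneg 0 1)) Ioc_subset_Ioi_self.eventuallyLE
    _ = (gaussianReal 0 1).real (Ioi a) := (gaussianReal_real_eq_integral 0 one_ne_zero _).symm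

lemma gaussianPDFReal_sqrt_add_one_le_gaussianReal_real_sq_gt (t : ℝ) :
    gaussianPDFReal 0 1 (√t + 1) ≤ (gaussianReal 0 1).real {x | t < x ^ 2} :=
  (gaussianPDFReal_add_one_le_gaussianReal_real_Ioi (sqrt_nonneg t)).trans <|
    measureReal_mono fun x (hx : √t < x) => (sqrt_lt' ((sqrt_nonneg t).trans_lt hx)).1 hx

lemma tendsto_mul_sub_sqrt_atTop {δ : ℝ} (hδ : 0 < δ) :
    Tendsto (fun L => δ * L - √(2 * L)) atTop atTop := by
  have h : Tendsto (fun L => √L * (δ * √L - √2)) atTop atTop :=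
    tendsto_sqrt_atTop.atTop_mul_atTop₀
      (tendsto_atTop_add_const_right _ _ (tendsto_sqrt_atTop.const_mul_atTop hδ))
  refine h.congr' ?_
  filter_upwards [eventually_ge_atTop 0] with L hL
  rw [sqrt_mul zero_le_two, mul_sub, ← mul_assoc, mul_comm √L δ, mul_assoc, mul_self_sqrt hL]
  ring

lemma tendsto_natCast_mul_gaussianReal_real_sq_gt_nhds_zero {ε : ℝ} (hε : 0 < ε) :
    Tendsto (fun n : ℕ => n * (gaussianReal 0 1).real {x | (1 + ε) * (2 * log n) < x ^ 2})
      atTop (𝓝 0) := by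
  have hlog : Tendsto (fun n : ℕ => log n) atTop atTop :=
    tendsto_log_atTop.comp tendsto_natCast_atTop_atTop
  have hbound : Tendsto (fun n : ℕ => 2 * exp (-(ε * log n))) atTop (𝓝 0) := by
    simpa using (tendsto_exp_atBot.comp
      (tendsto_neg_atTop_atBot.comp (hlog.const_mul_atTop hε))).const_mul 2
  refine tendsto_of_tendsto_of_tendsto_of_le_of_le' tendsto_const_nhds hbound
    (Eventually.of_forall fun n => by positivity) ?_
  filter_upwards [eventually_ge_atTop 1] with n hn
  have hL : 0 ≤ log n := log_nonneg (by exact_mod_cast hn)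
  calc (n : ℝ) * (gaussianReal 0 1).real {x | (1 + ε) * (2 * log n) < x ^ 2}
      ≤ exp (log n) * (2 * exp (-((1 + ε) * (2 * log n)) / 2)) := by
        rw [exp_log (by positivity)]
        gcongr
        exact gaussianReal_real_sq_gt_le (by positivity)
    _ = 2 * exp (-(ε * log n)) := by
        rw [mul_left_comm, ← exp_add]; ring_nf

/-- `min ε 1` rather than `ε`: for `ε > 1` the level `(1 - ε) 2L` is negative and `√` truncates
it to `0`. -/
lemma exp_mul_gaussianReal_real_sq_gt_ge {ε L : ℝ} (hε : 0 < ε) (hL : 0 ≤ L) :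
    (√(2 * π))⁻¹ * exp (min ε 1 * L - √(2 * L) - 1 / 2) ≤
      exp L * (gaussianReal 0 1).real {x | (1 - ε) * (2 * L) < x ^ 2} := by
  set δ := min ε 1
  set s := √((1 - ε) * (2 * L))
  set r := √((1 - δ) * (2 * L))
  have hδ0 : 0 < δ := lt_min hε one_pos
  have hδ1 : δ ≤ 1 := min_le_right _ _
  have hsr : s ≤ r := sqrt_le_sqrt (by gcongr; exact min_le_left _ _)
  have hr : r ≤ √(2 * L) := sqrt_le_sqrt (by nlinarith)
  have hr2 : r ^ 2 = (1 - δ) * (2 * L) := sq_sqrt (by nlinarith)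
  have hs0 : 0 ≤ s := sqrt_nonneg _
  calc (√(2 * π))⁻¹ * exp (δ * L - √(2 * L) - 1 / 2)
      ≤ (√(2 * π))⁻¹ * exp (L + -(s + 1) ^ 2 / 2) := by gcongr; nlinarith
    _ = exp L * gaussianPDFReal 0 1 (s + 1) := by
        simp only [gaussianPDFReal_def, NNReal.coe_one, mul_one, sub_zero, exp_add]; ring
    _ ≤ exp L * (gaussianReal 0 1).real {x | (1 - ε) * (2 * L) < x ^ 2} := by
        gcongr; exact gaussianPDFReal_sqrt_add_one_le_gaussianReal_real_sq_gt _

lemma tendsto_natCast_mul_gaussianReal_real_sq_gt_atTop {ε : ℝ} (hε : 0 < ε) :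
    Tendsto (fun n : ℕ => n * (gaussianReal 0 1).real {x | (1 - ε) * (2 * log n) < x ^ 2})
      atTop atTop := by
  have hlower : Tendsto (fun L => (√(2 * π))⁻¹ * exp (min ε 1 * L - √(2 * L) - 1 / 2))
      atTop atTop :=
    (tendsto_exp_atTop.comp (tendsto_atTop_add_const_right _ _
      (tendsto_mul_sub_sqrt_atTop (lt_min hε one_pos)))).const_mul_atTop (by positivity)
  refine tendsto_atTop_mono' _ ?_
    (hlower.comp (tendsto_log_atTop.comp tendsto_natCast_atTop_atTop))
  filter_upwards [eventually_ge_atTop 1] with n hn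
  have h := exp_mul_gaussianReal_real_sq_gt_ge hε
    (log_nonneg (by exact_mod_cast hn : (1 : ℝ) ≤ n))
  rwa [exp_log (by positivity)] at h

theorem orderStat_sq_gaussian_div_two_log_tendsto_general (Ω : Type*) [MeasurableSpace Ω]
    (P : Measure Ω) (Z : ℕ → Ω → ℝ)
    (hindep : iIndepFun Z P)
    (hlaw : ∀ i, P.map (Z i) = gaussianReal 0 1) (k : ℕ) :
    ∀ ε : ℝ, 0 < ε →
      (Tendsto (fun n : ℕ =>
          P {ω | k + 1 ≤
            ((Finset.range n).filter fun i => (1 + ε) * (2 * Real.log n) < (Z i ω) ^ 2).card})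
        atTop (nhds 0)) ∧
      (Tendsto (fun n : ℕ =>
          P {ω |
            ((Finset.range n).filter fun i => (1 - ε) * (2 * Real.log n) < (Z i ω) ^ 2).card ≤ k})
        atTop (nhds 0)) := by
  intro ε hε
  set μ := (gaussianReal 0 1).map (· ^ 2 : ℝ → ℝ)
  have : IsProbabilityMeasure μ := Measure.isProbabilityMeasure_map (by fun_prop)
  have hZ (i : ℕ) : HasLaw (Z i) (gaussianReal 0 1) P :=
    ⟨.of_map_ne_zero (by rw [hlaw i]; exact IsProbabilityMeasure.ne_zero _), hlaw i⟩
  have hX (i : ℕ) : HasLaw (fun ω => Z i ω ^ 2) μ P :=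
    HasLaw.fun_comp (Y := (· ^ 2)) ⟨by fun_prop, rfl⟩ (hZ i)
  have hindepX : iIndepFun (fun i ω => Z i ω ^ 2) P :=
    hindep.comp (fun _ x => x ^ 2) fun _ => by fun_prop
  have hμ (t : ℝ) : μ.real (Ioi t) = (gaussianReal 0 1).real {x | t < x ^ 2} :=
    map_measureReal_apply (by fun_prop) measurableSet_Ioi
  exact ⟨tendsto_measure_exceedanceCount_ge_nhds_zero hX
      (by simpa only [hμ] using tendsto_natCast_mul_gaussianReal_real_sq_gt_nhds_zero hε) k,
    tendsto_measure_exceedanceCount_le_nhds_zero hX hindepX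
      (by simpa only [hμ] using tendsto_natCast_mul_gaussianReal_real_sq_gt_atTop hε) k⟩

/-- For i.i.d. standard Gaussians `Z₁, Z₂, …` and a fixed `k ≥ 0`, for every `ε > 0`:
(a) `P(#{i ≤ n : Zᵢ² > (1+ε)·2·log n} ≥ k+1) → 0`, and
(b) `P(#{i ≤ n : Zᵢ² > (1−ε)·2·log n} ≤ k) → 0` as `n → ∞`;
i.e. the `(k+1)`-st largest of `Z₁², …, Zₙ²` divided by `2·log n` tends to `1` in
probability. -/
theorem orderStat_sq_gaussian_div_two_log_tendsto (Ω : Type*) [MeasurableSpace Ω]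
    (P : Measure Ω) [IsProbabilityMeasure P] (Z : ℕ → Ω → ℝ)
    (hmeas : ∀ i, Measurable (Z i))
    (hindep : iIndepFun Z P)
    (hlaw : ∀ i, P.map (Z i) = gaussianReal 0 1) (k : ℕ) :
    ∀ ε : ℝ, 0 < ε →
      (Tendsto (fun n : ℕ =>
          P {ω | k + 1 ≤
            ((Finset.range n).filter fun i => (1 + ε) * (2 * Real.log n) < (Z i ω) ^ 2).card})
        atTop (nhds 0)) ∧
      (Tendsto (fun n : ℕ =>
          P {ω |
            ((Finset.range n).filter fun i => (1 - ε) * (2 * Real.log n) < (Z i ω) ^ 2).card ≤ k})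
        atTop (nhds 0)) :=
  orderStat_sq_gaussian_div_two_log_tendsto_general Ω P Z hindep hlaw k
end
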